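/- Let p_{XY}, p_{XZ}, p_{YZ} : {−1,1} × {−1,1} → ℝ be nonnegative functions each summing to 1, which are no-signal consistent. Then for every real number t there exists exactly one function μ : {−1,1}³ → ℝ whose three pairwise marginals reproduce p_{XY}, p_{XZ}, p_{YZ} and whose triple correlation satisfies Σ_{(x,y,z)} x·y·z·μ(x,y,z) = t. In particular, there are infinitely many signed solutions μ with the prescribed pairwise marginals, parametrized by the (non-empirical) value t = ⟨XYZ⟩. -/

import Mathlib

/-!
The difference of two solutions has vanishing pairwise marginals, so flipping any one coordinate
negates it: it is a multiple of `xyz`, and equal triple correlations force the multiple to be `0`.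
For existence, the inclusion–exclusion combination of the pairwise marginals, the one-variable
marginals and the total mass reproduces the pairwise marginals (this is where no-signalling enters)
and has triple correlation `0`; adding `t/8 · xyz`, whose pairwise marginals vanish, moves the
triple correlation to `t`.
-/

/-- The two-point outcome set `{-1, 1}`. -/
abbrev PM : Type := ({-1, 1} : Finset ℤ)

namespace PM

def minusOne : PM := ⟨-1, by decide⟩

def plusOne : PM := ⟨1, by decide⟩

@[simp] lemma coe_minusOne : ((minusOne : ℤ) : ℝ) = -1 := by norm_num [minusOne]

@[simp] lemma coe_plusOne : ((plusOne : ℤ) : ℝ) = 1 := by norm_num [plusOne]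

lemma eq_minusOne_or_eq_plusOne (x : PM) : x = minusOne ∨ x = plusOne := by
  obtain ⟨v, hv⟩ := x
  simp only [Finset.mem_insert, Finset.mem_singleton] at hv
  rcases hv with rfl | rfl
  exacts [Or.inl rfl, Or.inr rfl]

lemma sum_eq {M : Type*} [AddCommMonoid M] (f : PM → M) :
    ∑ x : PM, f x = f minusOne + f plusOne := by
  rw [show (Finset.univ : Finset PM) = {minusOne, plusOne} by decide,
    Finset.sum_pair (by decide)]

end PM

open PM

def tripleCorrelation (μ : PM → PM → PM → ℝ) : ℝ :=
  ∑ x : PM, ∑ y : PM, ∑ z : PM, ((x : ℤ) : ℝ) * ((y : ℤ) : ℝ) * ((z : ℤ) : ℝ) * μ x y z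

noncomputable def jointOfMarginals (pXY pXZ pYZ : PM → PM → ℝ) (t : ℝ) (x y z : PM) : ℝ :=
  (pXY x y + pXZ x z + pYZ y z) / 2
    - (∑ y', pXY x y' + ∑ x', pXY x' y + ∑ x', pXZ x' z) / 4
    + (∑ x', ∑ y', pXY x' y') / 8 + t / 8 * (x : ℤ) * (y : ℤ) * (z : ℤ)

section jointOfMarginals

variable (pXY pXZ pYZ : PM → PM → ℝ) (t : ℝ)

lemma sum_jointOfMarginals_z (hX : ∀ x, ∑ y, pXY x y = ∑ z, pXZ x z)
    (hY : ∀ y, ∑ x, pXY x y = ∑ z, pYZ y z) (x y : PM) :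
    ∑ z, jointOfMarginals pXY pXZ pYZ t x y z = pXY x y := by
  have hXx := hX x
  have hYy := hY y
  have hXm := hX minusOne
  have hXp := hX plusOne
  simp only [jointOfMarginals, sum_eq, coe_minusOne, coe_plusOne] at hXx hYy hXm hXp ⊢
  linarith

lemma sum_jointOfMarginals_y (hZ : ∀ z, ∑ x, pXZ x z = ∑ y, pYZ y z) (x z : PM) :
    ∑ y, jointOfMarginals pXY pXZ pYZ t x y z = pXZ x z := by
  have hZz := hZ z
  simp only [jointOfMarginals, sum_eq, coe_minusOne, coe_plusOne] at hZz ⊢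
  linarith

lemma sum_jointOfMarginals_x (y z : PM) :
    ∑ x, jointOfMarginals pXY pXZ pYZ t x y z = pYZ y z := by
  simp only [jointOfMarginals, sum_eq, coe_minusOne, coe_plusOne]
  ring

lemma tripleCorrelation_jointOfMarginals :
    tripleCorrelation (jointOfMarginals pXY pXZ pYZ t) = t := by
  simp only [tripleCorrelation, jointOfMarginals, sum_eq, coe_minusOne, coe_plusOne]
  ring

end jointOfMarginals

lemma eq_mul_of_pairwise_marginals_eq_zero (δ : PM → PM → PM → ℝ)
    (hXY : ∀ x y, ∑ z, δ x y z = 0) (hXZ : ∀ x z, ∑ y, δ x y z = 0)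
    (hYZ : ∀ y z, ∑ x, δ x y z = 0) (x y z : PM) :
    δ x y z = (x : ℤ) * (y : ℤ) * (z : ℤ) * δ plusOne plusOne plusOne := by
  simp only [sum_eq] at hXY hXZ hYZ
  rcases eq_minusOne_or_eq_plusOne x with rfl | rfl <;>
    rcases eq_minusOne_or_eq_plusOne y with rfl | rfl <;>
    rcases eq_minusOne_or_eq_plusOne z with rfl | rfl <;>
    simp only [coe_minusOne, coe_plusOne] <;>
    linarith [hXY minusOne minusOne, hXY minusOne plusOne, hXY plusOne minusOne,
      hXY plusOne plusOne, hXZ minusOne minusOne, hXZ minusOne plusOne, hXZ plusOne minusOne,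
      hXZ plusOne plusOne, hYZ minusOne minusOne, hYZ minusOne plusOne, hYZ plusOne minusOne,
      hYZ plusOne plusOne]

lemma eq_of_marginals_eq_of_tripleCorrelation_eq {μ ν : PM → PM → PM → ℝ}
    (hXY : ∀ x y, ∑ z, μ x y z = ∑ z, ν x y z) (hXZ : ∀ x z, ∑ y, μ x y z = ∑ y, ν x y z)
    (hYZ : ∀ y z, ∑ x, μ x y z = ∑ x, ν x y z)
    (hXYZ : tripleCorrelation μ = tripleCorrelation ν) :
    μ = ν := by
  set δ : PM → PM → PM → ℝ := fun x y z => μ x y z - ν x y z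
  obtain ⟨c, hc⟩ : ∃ c : ℝ, ∀ x y z : PM, δ x y z = (x : ℤ) * (y : ℤ) * (z : ℤ) * c :=
    ⟨_, eq_mul_of_pairwise_marginals_eq_zero δ
      (fun x y => by simp only [δ, Finset.sum_sub_distrib, hXY, sub_self])
      (fun x z => by simp only [δ, Finset.sum_sub_distrib, hXZ, sub_self])
      (fun y z => by simp only [δ, Finset.sum_sub_distrib, hYZ, sub_self])⟩
  have hδXYZ : tripleCorrelation δ = 0 := by
    simp only [tripleCorrelation, δ, mul_sub, Finset.sum_sub_distrib]
    exact sub_eq_zero.mpr hXYZ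
  have hc₀ : c = 0 := by
    simp only [tripleCorrelation, hc, sum_eq, coe_minusOne, coe_plusOne] at hδXYZ
    linarith
  funext x y z
  have hxyz := hc x y z
  rw [hc₀, mul_zero] at hxyz
  exact sub_eq_zero.mp hxyz

theorem stmt_8 (pXY pXZ pYZ : PM → PM → ℝ)
    (hX : ∀ x, ∑ y : PM, pXY x y = ∑ z : PM, pXZ x z)
    (hY : ∀ y, ∑ x : PM, pXY x y = ∑ z : PM, pYZ y z)
    (hZ : ∀ z, ∑ x : PM, pXZ x z = ∑ y : PM, pYZ y z)
    (t : ℝ) :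
    ∃! μ : PM → PM → PM → ℝ,
      (∀ x y, ∑ z : PM, μ x y z = pXY x y) ∧
      (∀ x z, ∑ y : PM, μ x y z = pXZ x z) ∧
      (∀ y z, ∑ x : PM, μ x y z = pYZ y z) ∧
      (∑ x : PM, ∑ y : PM, ∑ z : PM,
        ((x : ℤ) : ℝ) * ((y : ℤ) : ℝ) * ((z : ℤ) : ℝ) * μ x y z = t) := by
  have hXY := sum_jointOfMarginals_z pXY pXZ pYZ t hX hY
  have hXZ := sum_jointOfMarginals_y pXY pXZ pYZ t hZ
  have hYZ := sum_jointOfMarginals_x pXY pXZ pYZ t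
  have hXYZ := tripleCorrelation_jointOfMarginals pXY pXZ pYZ t
  refine ⟨jointOfMarginals pXY pXZ pYZ t, ⟨hXY, hXZ, hYZ, hXYZ⟩, ?_⟩
  rintro ν ⟨hνXY, hνXZ, hνYZ, hνXYZ⟩
  exact eq_of_marginals_eq_of_tripleCorrelation_eq
    (fun x y => by rw [hνXY, hXY]) (fun x z => by rw [hνXZ, hXZ])
    (fun y z => by rw [hνYZ, hYZ]) (hνXYZ.trans hXYZ.symm)
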